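/- arXiv:2501.11769 — 4 statements merged into one kernel-verified Lean document; each statement's English description precedes it below -/
import Mathlib

section
/- If f : ℝ → ℝ is continuously differentiable and there exists C₀ > 0 such that f'(x) ≤ C₀(1 - x²) for all x, then there exists a constant C_f > 0 such that x·f(x) ≤ C_f - x² for all x ∈ ℝ. -/
theorem stmt_0 (f : ℝ → ℝ) (hf : ContDiff ℝ 1 f)
    (h : ∃ C₀ > (0:ℝ), ∀ x, deriv f x ≤ C₀ * (1 - x^2)) :
    ∃ Cf > (0:ℝ), ∀ x : ℝ, x * f x ≤ Cf - x^2 := by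
  obtain ⟨C₀, hC₀, hC⟩ := h
  have hdiff : Differentiable ℝ f := hf.differentiable one_ne_zero
  have hcont : Continuous (deriv f) := hf.continuous_deriv le_rfl
  have key : ∀ x : ℝ, f x - f 0 = ∫ y in (0:ℝ)..x, deriv f y := by
    intro x
    exact (intervalIntegral.integral_deriv_eq_sub (fun y _ => hdiff y)
      (hcont.intervalIntegrable _ _)).symm
  have hgint : ∀ a b : ℝ, IntervalIntegrable (fun y => C₀ * (1 - y^2)) MeasureTheory.volume a b := by
    intro a b
    exact (Continuous.intervalIntegrable (by continuity) a b)
  have hcomp : ∀ x : ℝ, (∫ y in (0:ℝ)..x, C₀ * (1 - y^2)) = C₀ * (x - x^3/3) := by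
    intro x
    rw [intervalIntegral.integral_const_mul]
    have : (∫ y in (0:ℝ)..x, (1 - y^2)) = x - x^3/3 := by
      rw [intervalIntegral.integral_sub intervalIntegrable_const
        ((continuous_pow 2).intervalIntegrable _ _)]
      simp [integral_pow]
      ring
    rw [this]
  have main : ∀ x : ℝ, x * (f x - f 0) ≤ C₀ * (x^2 - x^4/3) := by
    intro x
    rcases le_or_gt 0 x with hx | hx
    · have hle : (∫ y in (0:ℝ)..x, deriv f y) ≤ ∫ y in (0:ℝ)..x, C₀ * (1 - y^2) :=
        intervalIntegral.integral_mono_on hx (hcont.intervalIntegrable _ _) (hgint _ _)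
          (fun y _ => hC y)
      rw [key x]
      calc x * ∫ y in (0:ℝ)..x, deriv f y ≤ x * (C₀ * (x - x^3/3)) := by
            rw [← hcomp x]; exact mul_le_mul_of_nonneg_left hle hx
        _ = C₀ * (x^2 - x^4/3) := by ring
    · have hge : (∫ y in x..(0:ℝ), deriv f y) ≤ ∫ y in x..(0:ℝ), C₀ * (1 - y^2) :=
        intervalIntegral.integral_mono_on hx.le (hcont.intervalIntegrable _ _) (hgint _ _)
          (fun y _ => hC y)
      have hswap : (∫ y in (0:ℝ)..x, deriv f y) = -∫ y in x..(0:ℝ), deriv f y :=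
        (intervalIntegral.integral_symm _ _)
      have hswap2 : (∫ y in x..(0:ℝ), C₀ * (1 - y^2)) = -(C₀ * (x - x^3/3)) := by
        rw [intervalIntegral.integral_symm, hcomp x]
      have hge2 : C₀ * (x - x^3/3) ≤ ∫ y in (0:ℝ)..x, deriv f y := by
        rw [hswap]; rw [hswap2] at hge; linarith
      rw [key x]
      calc x * ∫ y in (0:ℝ)..x, deriv f y ≤ x * (C₀ * (x - x^3/3)) := by
            exact mul_le_mul_of_nonpos_left hge2 hx.le
        _ = C₀ * (x^2 - x^4/3) := by ring
  refine ⟨(f 0)^2/2 + 3*(C₀ + 3/2)^2/(4*C₀) + 1, by positivity, fun x => ?_⟩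
  have hm := main x
  have h1 : x * f 0 ≤ (f 0)^2/2 + x^2/2 := by nlinarith [sq_nonneg (x - f 0)]
  have h2 : (C₀ + 3/2) * x^2 - (C₀/3) * x^4 ≤ 3*(C₀ + 3/2)^2/(4*C₀) := by
    rw [le_div_iff₀ (by positivity)]
    nlinarith [sq_nonneg (2*C₀*x^2 - 3*(C₀ + 3/2)), sq_nonneg x]
  nlinarith
end

section
/- Let p : (0,T] → ℝ be nonnegative and differentiable, satisfying p'(t) ≤ -(σ²/2)(1+ε⁻¹)(p(t) - θ)³ whenever p(t) > θ, where σ > 0, ε ∈ (0,1], θ ≥ 0. Then p(t) ≤ sqrt(ε/(σ²(1+ε)t)) + θ for all t ∈ (0,T]. -/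
open Set

theorem stmt_12 (T σ ε θ : ℝ) (hT : 0 < T) (hσ : 0 < σ)
    (hε : ε ∈ Set.Ioc (0:ℝ) 1) (hθ : 0 ≤ θ)
    (p p' : ℝ → ℝ)
    (hpos : ∀ t ∈ Set.Ioc (0:ℝ) T, 0 ≤ p t)
    (hderiv : ∀ t ∈ Set.Ioc (0:ℝ) T, HasDerivAt p (p' t) t)
    (hineq : ∀ t ∈ Set.Ioc (0:ℝ) T, θ < p t →
      p' t ≤ -(σ ^ 2 / 2) * (1 + ε⁻¹) * (p t - θ) ^ 3) :
    ∀ t ∈ Set.Ioc (0:ℝ) T, p t ≤ Real.sqrt (ε / (σ ^ 2 * (1 + ε) * t)) + θ := by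
  obtain ⟨hε0, hε1⟩ := hε
  intro t₀ ht₀
  obtain ⟨ht₀0, ht₀T⟩ := ht₀
  by_cases hpt : p t₀ ≤ θ
  · have := Real.sqrt_nonneg (ε / (σ ^ 2 * (1 + ε) * t₀)); linarith
  push_neg at hpt
  set c : ℝ := σ ^ 2 * (1 + ε⁻¹) with hc_def
  have hεinv : 0 < ε⁻¹ := by positivity
  have hc : 0 < c := by positivity
  set A : Set ℝ := insert 0 {s | s ∈ Set.Ioc (0:ℝ) t₀ ∧ p s ≤ θ} with hA
  have hA0 : (0:ℝ) ∈ A := mem_insert _ _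
  have hAub : ∀ s ∈ A, s ≤ t₀ := by
    rintro s (rfl | ⟨hs, _⟩)
    · exact le_of_lt ht₀0
    · exact hs.2
  have hAbdd : BddAbove A := ⟨t₀, hAub⟩
  set a := sSup A with ha_def
  have ha0 : 0 ≤ a := le_csSup hAbdd hA0
  have haT : a ≤ t₀ := csSup_le ⟨0, hA0⟩ hAub
  have hgt : ∀ s, a < s → s ≤ t₀ → θ < p s := by
    intro s hs1 hs2
    by_contra h
    push_neg at h
    have hsA : s ∈ A := Or.inr ⟨⟨lt_of_le_of_lt ha0 hs1, hs2⟩, h⟩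
    exact absurd (le_csSup hAbdd hsA) (not_le.2 hs1)
  -- a < t₀
  have haltt : a < t₀ := by
    rcases lt_or_eq_of_le haT with h | h
    · exact h
    exfalso
    have hct : ContinuousAt p t₀ := (hderiv t₀ ⟨ht₀0, ht₀T⟩).continuousAt
    have hev : ∀ᶠ s in nhds t₀, θ < p s :=
      continuousAt_const.eventually_lt hct hpt
    obtain ⟨η, hη, hball⟩ := Metric.eventually_nhds_iff.1 hev
    have hub : ∀ s ∈ A, s ≤ max 0 (t₀ - η) := by
      rintro s (rfl | ⟨⟨hs0, hst⟩, hsθ⟩)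
      · exact le_max_left _ _
      · refine le_trans ?_ (le_max_right _ _)
        by_contra hcon
        push_neg at hcon
        have : dist s t₀ < η := by
          rw [Real.dist_eq, abs_lt]; constructor <;> linarith
        exact absurd (hball this) (not_lt.2 hsθ)
    have : a ≤ max 0 (t₀ - η) := csSup_le ⟨0, hA0⟩ hub
    have : t₀ ≤ max 0 (t₀ - η) := h ▸ this
    have hlt : max 0 (t₀ - η) < t₀ := max_lt ht₀0 (by linarith)
    linarith
  -- the function h and its derivative H
  set h : ℝ → ℝ := fun s => ((p s - θ) ^ 2)⁻¹ with hh_def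
  set H : ℝ → ℝ := fun s => -(↑2 * (p s - θ) ^ 1 * p' s) / ((p s - θ) ^ 2) ^ 2 with hH_def
  have hmem : ∀ x, a < x → x ≤ t₀ → x ∈ Set.Ioc (0:ℝ) T :=
    fun x hx1 hx2 => ⟨lt_of_le_of_lt ha0 hx1, le_trans hx2 ht₀T⟩
  have hHd : ∀ x, a < x → x ≤ t₀ → HasDerivAt h (H x) x := by
    intro x hx1 hx2
    have hpx : θ < p x := hgt x hx1 hx2
    have h1 : HasDerivAt (fun s => (p s - θ) ^ 2) (↑2 * (p x - θ) ^ 1 * p' x) x :=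
      ((hderiv x (hmem x hx1 hx2)).sub_const θ).pow 2
    have hu2 : (0:ℝ) < p x - θ := by linarith
    exact h1.inv (pow_ne_zero 2 hu2.ne')
  have hHc : ∀ x, a < x → x ≤ t₀ → c ≤ H x := by
    intro x hx1 hx2
    have hpx : θ < p x := hgt x hx1 hx2
    have hpx' : p' x ≤ -(σ ^ 2 / 2) * (1 + ε⁻¹) * (p x - θ) ^ 3 :=
      hineq x (hmem x hx1 hx2) hpx
    have hu : 0 < p x - θ := by linarith
    rw [hH_def]
    simp only
    rw [le_div_iff₀ (by positivity)]
    have h2 : 2 * (p x - θ) * p' x ≤ 2 * (p x - θ) * (-(σ ^ 2 / 2) * (1 + ε⁻¹) * (p x - θ) ^ 3) :=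
      mul_le_mul_of_nonneg_left hpx' (by positivity)
    nlinarith [pow_pos hu 4, sq_nonneg (p x - θ)]
  -- key monotonicity via MVT
  have key : ∀ s, a < s → s ≤ t₀ → h s + c * (t₀ - s) ≤ h t₀ := by
    intro s hs1 hs2
    rcases eq_or_lt_of_le hs2 with rfl | hs2'
    · simp
    have hcont : ContinuousOn h (Icc s t₀) := fun x hx =>
      (hHd x (lt_of_lt_of_le hs1 hx.1) hx.2).continuousAt.continuousWithinAt
    obtain ⟨ξ, hξ, hslope⟩ := exists_hasDerivAt_eq_slope h H hs2' hcont
      (fun x hx => hHd x (lt_trans hs1 hx.1) (le_of_lt hx.2))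
    have hcξ : c ≤ H ξ := hHc ξ (lt_trans hs1 hξ.1) (le_of_lt hξ.2)
    rw [hslope] at hcξ
    have := (le_div_iff₀ (by linarith : (0:ℝ) < t₀ - s)).1 hcξ
    linarith
  have hhpos : ∀ s, a < s → s ≤ t₀ → 0 < h s := by
    intro s hs1 hs2
    have := hgt s hs1 hs2
    have : 0 < p s - θ := by linarith
    positivity
  -- conclude c * t₀ ≤ h t₀
  have hfin : c * t₀ ≤ h t₀ := by
    rcases eq_or_lt_of_le ha0 with ha | ha
    · -- a = 0
      by_contra hcon
      push_neg at hcon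
      set δ := c * t₀ - h t₀ with hδ
      have hδ0 : 0 < δ := by linarith
      set s := min t₀ (δ / (2 * c)) with hs
      have hs0 : 0 < s := lt_min ht₀0 (by positivity)
      have hst : s ≤ t₀ := min_le_left _ _
      have hsδ : s ≤ δ / (2 * c) := min_le_right _ _
      have h1 := key s (ha ▸ hs0) hst
      have h2 := hhpos s (ha ▸ hs0) hst
      have h3 : c * s ≤ δ / 2 := by
        calc c * s ≤ c * (δ / (2 * c)) := by nlinarith
        _ = δ / 2 := by field_simp
      nlinarith
    · -- a > 0 : derive a contradiction
      exfalso
      have hca : ContinuousAt p a := (hderiv a ⟨ha, le_trans haT ht₀T⟩).continuousAt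
      -- p a ≥ θ
      have hge : θ ≤ p a := by
        by_contra hcon
        push_neg at hcon
        have hev : ∀ᶠ s in nhds a, p s < θ :=
          hca.eventually_lt continuousAt_const hcon
        obtain ⟨η, hη, hball⟩ := Metric.eventually_nhds_iff.1 hev
        set s := min (a + η / 2) ((a + t₀) / 2) with hs
        have hs1 : a < s := lt_min (by linarith) (by linarith)
        have hs2 : s ≤ t₀ := le_trans (min_le_right _ _) (by linarith)
        have hsd : dist s a < η := by
          rw [Real.dist_eq, abs_lt]
          constructor
          · linarith
          · have := min_le_left (a + η / 2) ((a + t₀) / 2); linarith [hs ▸ this]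
        exact absurd (hball hsd) (not_lt.2 (le_of_lt (hgt s hs1 hs2)))
      -- p a ≤ θ
      have hle : p a ≤ θ := by
        by_contra hcon
        push_neg at hcon
        have hev : ∀ᶠ s in nhds a, θ < p s :=
          continuousAt_const.eventually_lt hca hcon
        obtain ⟨η, hη, hball⟩ := Metric.eventually_nhds_iff.1 hev
        have hub : ∀ s ∈ A, s ≤ max 0 (a - η / 2) := by
          rintro s (rfl | ⟨⟨hs0, hst⟩, hsθ⟩)
          · exact le_max_left _ _
          · refine le_trans ?_ (le_max_right _ _)
            by_contra hcon2
            push_neg at hcon2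
            have hsa : s ≤ a := le_csSup hAbdd (Or.inr ⟨⟨hs0, hst⟩, hsθ⟩)
            have : dist s a < η := by
              rw [Real.dist_eq, abs_lt]; constructor <;> linarith
            exact absurd (hball this) (not_lt.2 hsθ)
        have h1 : a ≤ max 0 (a - η / 2) := csSup_le ⟨0, hA0⟩ hub
        have h2 : max 0 (a - η / 2) < a := max_lt ha (by linarith)
        linarith
      have hpa : p a = θ := le_antisymm hle hge
      -- f s = (p s - θ)^2 is small near a
      set K := (p t₀ - θ) ^ 2 with hK
      have hK0 : 0 < K := by
        have hpu : 0 < p t₀ - θ := by linarith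
        positivity
      have hfc : ContinuousAt (fun s => (p s - θ) ^ 2) a :=
        (hca.sub continuousAt_const).pow 2
      have hfa : (p a - θ) ^ 2 < K := by rw [hpa]; simpa using hK0
      have hev : ∀ᶠ s in nhds a, (p s - θ) ^ 2 < K :=
        hfc.eventually_lt continuousAt_const hfa
      obtain ⟨η, hη, hball⟩ := Metric.eventually_nhds_iff.1 hev
      set s := min (a + η / 2) ((a + t₀) / 2) with hs
      have hs1 : a < s := lt_min (by linarith) (by linarith)
      have hs2 : s < t₀ := lt_of_le_of_lt (min_le_right _ _) (by linarith)
      have hsd : dist s a < η := by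
        rw [Real.dist_eq, abs_lt]
        constructor
        · linarith
        · have := min_le_left (a + η / 2) ((a + t₀) / 2); linarith [hs ▸ this]
      have hfs : (p s - θ) ^ 2 < K := hball hsd
      have hfs0 : 0 < (p s - θ) ^ 2 := by
        have := hgt s hs1 (le_of_lt hs2)
        have : 0 < p s - θ := by linarith
        positivity
      have hinv : K⁻¹ < ((p s - θ) ^ 2)⁻¹ := by
        exact inv_strictAnti₀ hfs0 hfs
      have hk := key s hs1 (le_of_lt hs2)
      have ht : h t₀ = K⁻¹ := rfl
      have hhs : h s = ((p s - θ) ^ 2)⁻¹ := rfl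
      have hcts : 0 < c * (t₀ - s) := mul_pos hc (by linarith)
      rw [ht, hhs] at hk
      linarith
  -- translate back
  have hu : 0 < p t₀ - θ := by linarith
  have hct0 : 0 < c * t₀ := by positivity
  have hsq : (p t₀ - θ) ^ 2 ≤ (c * t₀)⁻¹ := by
    have h1 : (((p t₀ - θ) ^ 2)⁻¹)⁻¹ ≤ (c * t₀)⁻¹ := inv_anti₀ hct0 hfin
    rwa [inv_inv] at h1
  have heq : (c * t₀)⁻¹ = ε / (σ ^ 2 * (1 + ε) * t₀) := by
    rw [hc_def, eq_div_iff (by positivity : σ ^ 2 * (1 + ε) * t₀ ≠ 0), inv_mul_eq_div,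
      div_eq_iff (by positivity : σ ^ 2 * (1 + ε⁻¹) * t₀ ≠ 0)]
    have hee : ε * ε⁻¹ = 1 := mul_inv_cancel₀ hε0.ne'
    linear_combination (-(σ ^ 2 * t₀)) * hee
  have : p t₀ - θ ≤ Real.sqrt (ε / (σ ^ 2 * (1 + ε) * t₀)) :=
    Real.le_sqrt_of_sq_le (heq ▸ hsq)
  linarith
end

section
/- Let μ_ε = exp(φ_ε/ε) be probability densities on ℝ (ε in a sequence εₙ → 0), and suppose φ_{εₙ} converges locally uniformly to a continuous function φ : ℝ → ℝ. Then φ(x) ≤ 0 for all x ∈ ℝ. -/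
open MeasureTheory Filter

theorem stmt_14 (ε : ℕ → ℝ) (hεpos : ∀ n, 0 < ε n)
    (hε : Tendsto ε atTop (nhds 0))
    (φn : ℕ → ℝ → ℝ) (φ : ℝ → ℝ) (hφ : Continuous φ)
    (hint : ∀ n, Integrable (fun x => Real.exp (φn n x / ε n)))
    (hprob : ∀ n, ∫ x : ℝ, Real.exp (φn n x / ε n) = 1)
    (hconv : TendstoLocallyUniformly φn φ atTop) :
    ∀ x : ℝ, φ x ≤ 0 := by
  by_contra h
  push_neg at h
  obtain ⟨x₀, hx₀⟩ := h
  set δ := φ x₀ with hδ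
  -- find closed interval where φ > δ/2
  have hnb : ∀ᶠ y in nhds x₀, δ / 2 < φ y :=
    (hφ.tendsto x₀).eventually (eventually_gt_nhds (by linarith))
  obtain ⟨r', hr', hball⟩ := Metric.eventually_nhds_iff_ball.1 hnb
  set r := r' / 2 with hr
  have hrpos : 0 < r := by positivity
  set S : Set ℝ := Set.Icc (x₀ - r) (x₀ + r) with hS
  have hSsub : ∀ y ∈ S, δ / 2 < φ y := by
    intro y hy
    apply hball
    rw [Metric.mem_ball, Real.dist_eq]
    rcases hy with ⟨h1, h2⟩
    rw [abs_lt]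
    constructor <;> simp only [hr] at * <;> linarith
  -- uniform convergence on S
  have hcomp : IsCompact S := isCompact_Icc
  have hunif : TendstoUniformlyOn φn φ atTop S :=
    (tendstoLocallyUniformly_iff_forall_isCompact.1 hconv) S hcomp
  have hev1 : ∀ᶠ n in atTop, ∀ y ∈ S, dist (φ y) (φn n y) < δ / 4 :=
    Metric.tendstoUniformlyOn_iff.1 hunif (δ / 4) (by linarith)
  -- eventually 2r * exp((δ/4)/εn) > 1
  have hεpos' : ∀ᶠ n in atTop, ε n ∈ Set.Ioi (0:ℝ) :=
    Eventually.of_forall fun n => hεpos n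
  have hε' : Tendsto ε atTop (nhdsWithin 0 (Set.Ioi 0)) :=
    tendsto_nhdsWithin_of_tendsto_nhds_of_eventually_within ε hε hεpos'
  have hinv : Tendsto (fun n => (ε n)⁻¹) atTop atTop :=
    tendsto_inv_nhdsGT_zero.comp hε'
  have hdiv : Tendsto (fun n => δ / 4 / ε n) atTop atTop := by
    simp only [div_eq_mul_inv]
    exact hinv.const_mul_atTop (by positivity)
  have hexp : Tendsto (fun n => 2 * r * Real.exp (δ / 4 / ε n)) atTop atTop :=
    (Real.tendsto_exp_atTop.comp hdiv).const_mul_atTop (by positivity)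
  have hev2 : ∀ᶠ n in atTop, 1 < 2 * r * Real.exp (δ / 4 / ε n) :=
    hexp.eventually_gt_atTop 1
  obtain ⟨n, h1, h2⟩ := (hev1.and hev2).exists
  -- lower bound on integral
  have hlb : ∀ y ∈ S, Real.exp (δ / 4 / ε n) ≤ Real.exp (φn n y / ε n) := by
    intro y hy
    apply Real.exp_le_exp.2
    apply div_le_div_of_nonneg_right _ (hεpos n).le
    have := hSsub y hy
    have := h1 y hy
    rw [Real.dist_eq, abs_lt] at this
    linarith
  have hmeas : MeasurableSet S := measurableSet_Icc
  have hvolS : (volume S).toReal = 2 * r := by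
    rw [hS, Real.volume_Icc]
    rw [ENNReal.toReal_ofReal (by linarith)]
    ring
  have hconst : IntegrableOn (fun _ : ℝ => Real.exp (δ / 4 / ε n)) S := by
    refine integrableOn_const ?_ enorm_ne_top
    rw [hS, Real.volume_Icc]
    exact ENNReal.ofReal_ne_top
  have hint1 : (2 * r) * Real.exp (δ / 4 / ε n)
      ≤ ∫ x in S, Real.exp (φn n x / ε n) := by
    have := setIntegral_mono_on hconst ((hint n).integrableOn) hmeas hlb
    rwa [setIntegral_const, measureReal_def, hvolS, smul_eq_mul] at this
  have hint2 : ∫ x in S, Real.exp (φn n x / ε n) ≤ ∫ x : ℝ, Real.exp (φn n x / ε n) :=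
    setIntegral_le_integral (hint n) (Eventually.of_forall fun x => (Real.exp_pos _).le)
  rw [hprob n] at hint2
  linarith
end

section
/- Let μ_ε = exp(φ_ε/ε) be probability densities on ℝ with φ_{εₙ} → φ locally uniformly (εₙ → 0, φ continuous), and suppose there exist C₁ > 0, C₂, M with φ_{εₙ}(x) ≤ -C₁x² + C₂ for all |x| > M and all n. Then sup_{x∈ℝ} φ(x) = 0. -/
open MeasureTheory Filter

theorem stmt_15 (ε : ℕ → ℝ) (hεpos : ∀ n, 0 < ε n)
    (hε : Tendsto ε atTop (nhds 0))
    (φn : ℕ → ℝ → ℝ) (φ : ℝ → ℝ) (hφ : Continuous φ)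
    (hint : ∀ n, Integrable (fun x => Real.exp (φn n x / ε n)))
    (hprob : ∀ n, ∫ x : ℝ, Real.exp (φn n x / ε n) = 1)
    (hconv : TendstoLocallyUniformly φn φ atTop)
    (C₁ C₂ M : ℝ) (hC₁ : 0 < C₁)
    (htail : ∀ n, ∀ x : ℝ, M < |x| → φn n x ≤ -C₁ * x ^ 2 + C₂) :
    IsLUB (Set.range φ) 0 := by
  have hcomp := (tendstoLocallyUniformly_iff_forall_isCompact).mp hconv
  have h1 : Tendsto (fun n => (ε n)⁻¹) atTop atTop := by
    have hev : Tendsto ε atTop (nhdsWithin 0 (Set.Ioi 0)) :=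
      tendsto_nhdsWithin_iff.mpr ⟨hε, Eventually.of_forall hεpos⟩
    exact tendsto_inv_nhdsGT_zero.comp hev
  -- Part (a): φ ≤ 0 everywhere
  have hle : ∀ x, φ x ≤ 0 := by
    intro x₀
    by_contra h
    push_neg at h
    obtain ⟨a, ha⟩ : ∃ a, a = φ x₀ := ⟨_, rfl⟩
    have hapos : 0 < a := ha ▸ h
    have hopen : IsOpen (φ ⁻¹' Set.Ioi (a / 2)) := (isOpen_Ioi).preimage hφ
    have hx₀ : x₀ ∈ φ ⁻¹' Set.Ioi (a / 2) := by
      simp only [Set.mem_preimage, Set.mem_Ioi]; rw [ha]; linarith [ha ▸ hapos]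
    obtain ⟨δ, hδpos, hδ⟩ := Metric.isOpen_iff.mp hopen x₀ hx₀
    have hJsub : Set.Icc (x₀ - δ / 2) (x₀ + δ / 2) ⊆ φ ⁻¹' Set.Ioi (a / 2) := by
      intro x hx
      apply hδ
      rw [Metric.mem_ball, Real.dist_eq]
      rw [Set.mem_Icc] at hx
      rw [abs_lt]; constructor <;> linarith [hx.1, hx.2]
    have hUnif := (Metric.tendstoUniformlyOn_iff.mp
      (hcomp _ (isCompact_Icc (a := x₀ - δ / 2) (b := x₀ + δ / 2)))) (a / 4) (by linarith)
    have hBig : Tendsto (fun n => Real.exp (a / 4 * (ε n)⁻¹) * δ) atTop atTop :=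
      (Real.tendsto_exp_atTop.comp (h1.const_mul_atTop (by linarith))).atTop_mul_const hδpos
    have hBig1 : ∀ᶠ n in atTop, 1 < Real.exp (a / 4 * (ε n)⁻¹) * δ :=
      hBig.eventually_gt_atTop 1
    obtain ⟨n, hn1, hn2⟩ := (hUnif.and hBig1).exists
    have hge : ∀ x ∈ Set.Icc (x₀ - δ / 2) (x₀ + δ / 2),
        Real.exp (a / 4 * (ε n)⁻¹) ≤ Real.exp (φn n x / ε n) := by
      intro x hx
      apply Real.exp_le_exp.mpr
      have h1x : a / 2 < φ x := hJsub hx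
      have h2x := hn1 x hx
      rw [Real.dist_eq, abs_lt] at h2x
      have hax : a / 4 ≤ φn n x := by linarith [h2x.1, h2x.2]
      rw [div_eq_mul_inv]
      exact mul_le_mul_of_nonneg_right hax (le_of_lt (inv_pos.mpr (hεpos n)))
    have hlow : Real.exp (a / 4 * (ε n)⁻¹) * δ ≤
        ∫ x in Set.Icc (x₀ - δ / 2) (x₀ + δ / 2), Real.exp (φn n x / ε n) := by
      have h := setIntegral_ge_of_const_le_real (μ := volume) measurableSet_Icc
        (by rw [Real.volume_Icc]; exact ENNReal.ofReal_ne_top) hge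
        ((hint n).integrableOn)
      rw [Real.volume_real_Icc_of_le (by linarith)] at h
      calc Real.exp (a / 4 * (ε n)⁻¹) * δ
          = Real.exp (a / 4 * (ε n)⁻¹) * (x₀ + δ / 2 - (x₀ - δ / 2)) := by ring_nf
        _ ≤ _ := h
    have hup : ∫ x in Set.Icc (x₀ - δ / 2) (x₀ + δ / 2), Real.exp (φn n x / ε n) ≤ 1 := by
      rw [← hprob n]
      exact setIntegral_le_integral (hint n)
        (Eventually.of_forall fun x => (Real.exp_pos _).le)
    linarith
  constructor
  · rintro y ⟨x, rfl⟩
    exact hle x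
  · intro b hb
    by_contra hb0
    push_neg at hb0
    have hφb : ∀ x, φ x ≤ b := fun x => hb ⟨x, rfl⟩
    obtain ⟨M', hM'⟩ : ∃ y, y = |M| + Real.sqrt (2 * |C₂| / C₁) + 1 := ⟨_, rfl⟩
    have hsq : 0 ≤ 2 * |C₂| / C₁ := by positivity
    have hsqrtnn : 0 ≤ Real.sqrt (2 * |C₂| / C₁) := Real.sqrt_nonneg _
    have hM'pos : 0 < M' := by rw [hM']; positivity
    have hMM' : M < M' := by
      have := le_abs_self M; rw [hM']; linarith
    have hM'2 : 2 * |C₂| / C₁ ≤ M' ^ 2 := by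
      have h2 : Real.sqrt (2 * |C₂| / C₁) ^ 2 = 2 * |C₂| / C₁ := Real.sq_sqrt hsq
      rw [hM']
      nlinarith [abs_nonneg M, hsqrtnn]
    have hC₂ : C₂ ≤ C₁ * M' ^ 2 / 2 := by
      rw [div_le_iff₀ hC₁] at hM'2
      nlinarith [le_abs_self C₂]
    have hM'sqpos : 0 < C₁ * M' ^ 2 := by positivity
    have hgint : Integrable (fun x : ℝ => Real.exp (-(C₁ / 4) * x ^ 2)) :=
      integrable_exp_neg_mul_sq (by positivity)
    obtain ⟨I, hI⟩ : ∃ y, y = ∫ x : ℝ, Real.exp (-(C₁ / 4) * x ^ 2) := ⟨_, rfl⟩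
    have hInn : 0 ≤ I := hI ▸ integral_nonneg fun x => (Real.exp_pos _).le
    -- eventual facts
    have F1 : ∀ᶠ n in atTop, ε n ≤ 1 :=
      (hε.eventually_lt_const zero_lt_one).mono fun n h => h.le
    have F2 : ∀ᶠ n in atTop, ∀ x ∈ Set.Icc (-M') M', dist (φ x) (φn n x) < -b / 2 :=
      (Metric.tendstoUniformlyOn_iff.mp (hcomp _ isCompact_Icc)) (-b / 2) (by linarith)
    have hAto : Tendsto (fun n => Real.exp (-(C₁ * M' ^ 2 / 2) * (ε n)⁻¹ + C₁ * M' ^ 2 / 4))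
        atTop (nhds 0) := by
      have harg : Tendsto (fun n => -(C₁ * M' ^ 2 / 2) * (ε n)⁻¹ + C₁ * M' ^ 2 / 4)
          atTop atBot := by
        apply tendsto_atBot_add_const_right
        exact (tendsto_const_mul_atBot_of_neg (by linarith)).mpr h1
      exact Real.tendsto_exp_atBot.comp harg
    have hBto : Tendsto (fun n => Real.exp (b / 2 * (ε n)⁻¹)) atTop (nhds 0) := by
      have harg : Tendsto (fun n => b / 2 * (ε n)⁻¹) atTop atBot :=
        (tendsto_const_mul_atBot_of_neg (by linarith)).mpr h1
      exact Real.tendsto_exp_atBot.comp harg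
    have F3 : ∀ᶠ n in atTop,
        Real.exp (b / 2 * (ε n)⁻¹) * (2 * M') +
          Real.exp (-(C₁ * M' ^ 2 / 2) * (ε n)⁻¹ + C₁ * M' ^ 2 / 4) * I < 1 := by
      have hlim : Tendsto (fun n => Real.exp (b / 2 * (ε n)⁻¹) * (2 * M') +
          Real.exp (-(C₁ * M' ^ 2 / 2) * (ε n)⁻¹ + C₁ * M' ^ 2 / 4) * I)
          atTop (nhds (0 * (2 * M') + 0 * I)) := (hBto.mul_const _).add (hAto.mul_const _)
      rw [zero_mul, zero_mul, add_zero] at hlim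
      exact hlim.eventually_lt_const zero_lt_one
    obtain ⟨n, hε1, hnK, hn3⟩ := (F1.and (F2.and F3)).exists
    have hupos : 0 < (ε n)⁻¹ := inv_pos.mpr (hεpos n)
    have hu1 : 1 ≤ (ε n)⁻¹ := one_le_inv_iff₀.mpr ⟨hεpos n, hε1⟩
    -- bound on K
    have hKbound : ∀ x ∈ Set.Icc (-M') M',
        Real.exp (φn n x / ε n) ≤ Real.exp (b / 2 * (ε n)⁻¹) := by
      intro x hx
      apply Real.exp_le_exp.mpr
      have h2x := hnK x hx
      rw [Real.dist_eq, abs_lt] at h2x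
      have hb2 : φn n x ≤ b / 2 := by linarith [h2x.1, h2x.2, hφb x]
      rw [div_eq_mul_inv]
      exact mul_le_mul_of_nonneg_right hb2 hupos.le
    have hKint : ∫ x in Set.Icc (-M') M', Real.exp (φn n x / ε n) ≤
        Real.exp (b / 2 * (ε n)⁻¹) * (2 * M') := by
      have h := setIntegral_mono_on ((hint n).integrableOn)
        ((integrableOn_const_iff).mpr (Or.inr (by rw [Real.volume_Icc]; exact ENNReal.ofReal_lt_top)))
        measurableSet_Icc hKbound
      rw [setIntegral_const, Real.volume_real_Icc_of_le (by linarith),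
        smul_eq_mul] at h
      calc ∫ x in Set.Icc (-M') M', Real.exp (φn n x / ε n)
          ≤ (M' - -M') * Real.exp (b / 2 * (ε n)⁻¹) := h
        _ = Real.exp (b / 2 * (ε n)⁻¹) * (2 * M') := by ring
    -- bound on the complement
    have hCbound : ∀ x ∈ (Set.Icc (-M') M')ᶜ, Real.exp (φn n x / ε n) ≤
        Real.exp (-(C₁ * M' ^ 2 / 2) * (ε n)⁻¹ + C₁ * M' ^ 2 / 4) *
          Real.exp (-(C₁ / 4) * x ^ 2) := by
      intro x hx
      have hxabs : M' < |x| := by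
        rw [Set.mem_compl_iff, Set.mem_Icc, not_and_or] at hx
        rcases hx with h | h
        · push_neg at h; rw [abs_of_neg (by linarith)]; linarith
        · push_neg at h; rw [abs_of_pos (by linarith)]; exact h
      have hx2 : M' ^ 2 ≤ x ^ 2 := by nlinarith [abs_nonneg x, sq_abs x]
      have htl := htail n x (lt_trans hMM' hxabs)
      rw [← Real.exp_add]
      apply Real.exp_le_exp.mpr
      rw [div_eq_mul_inv]
      have hstep : φn n x * (ε n)⁻¹ ≤ (-C₁ * x ^ 2 + C₂) * (ε n)⁻¹ :=
        mul_le_mul_of_nonneg_right htl hupos.le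
      have hstep2 : C₂ * (ε n)⁻¹ ≤ C₁ * M' ^ 2 / 2 * (ε n)⁻¹ :=
        mul_le_mul_of_nonneg_right hC₂ hupos.le
      have hPnn : (0:ℝ) ≤ C₁ * (x ^ 2 - M' ^ 2) := by nlinarith
      have hstep3 : C₁ * (x ^ 2 - M' ^ 2) * 1 ≤ C₁ * (x ^ 2 - M' ^ 2) * (ε n)⁻¹ :=
        mul_le_mul_of_nonneg_left hu1 hPnn
      nlinarith [hstep, hstep2, hstep3, hPnn]
    have hCint : ∫ x in (Set.Icc (-M') M')ᶜ, Real.exp (φn n x / ε n) ≤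
        Real.exp (-(C₁ * M' ^ 2 / 2) * (ε n)⁻¹ + C₁ * M' ^ 2 / 4) * I := by
      have hmeas : MeasurableSet (Set.Icc (-M') M')ᶜ := measurableSet_Icc.compl
      have h := setIntegral_mono_on ((hint n).integrableOn)
        ((hgint.const_mul _).integrableOn) hmeas hCbound
      calc ∫ x in (Set.Icc (-M') M')ᶜ, Real.exp (φn n x / ε n)
          ≤ ∫ x in (Set.Icc (-M') M')ᶜ,
              Real.exp (-(C₁ * M' ^ 2 / 2) * (ε n)⁻¹ + C₁ * M' ^ 2 / 4) *
                Real.exp (-(C₁ / 4) * x ^ 2) := h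
        _ = Real.exp (-(C₁ * M' ^ 2 / 2) * (ε n)⁻¹ + C₁ * M' ^ 2 / 4) *
              ∫ x in (Set.Icc (-M') M')ᶜ, Real.exp (-(C₁ / 4) * x ^ 2) := by
            rw [integral_const_mul]
        _ ≤ _ := by
            apply mul_le_mul_of_nonneg_left _ (Real.exp_pos _).le
            rw [hI]
            exact setIntegral_le_integral hgint
              (Eventually.of_forall fun x => (Real.exp_pos _).le)
    have hsplit : (∫ x in Set.Icc (-M') M', Real.exp (φn n x / ε n)) +
        ∫ x in (Set.Icc (-M') M')ᶜ, Real.exp (φn n x / ε n) = 1 := by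
      rw [integral_add_compl measurableSet_Icc (hint n), hprob n]
    linarith
end
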